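/- arXiv:2411.16745 — 7 statements merged into one kernel-verified Lean document; each statement's English description precedes it below -/
import Mathlib

section
/- Let f : ℝ^n → ℝ be differentiable and quasi-convex, i.e., for all x, y ∈ ℝ^n, f(y) ≤ f(x) implies ⟨∇f(x), y − x⟩ ≤ 0, and suppose f attains its global minimum at a point x*. Assume further that f is strictly quasi-convex in the sense that ∇f(y) = 0 implies f(y) = f(x*). Define ω(τ) = sup{ f(x) − f(x*) : x ∈ ℝ^n, ‖x − x*‖ ≤ τ } for τ ≥ 0. Then for every y ∈ ℝ^n, f(y) − f(x*) ≤ ω(v_f(y, x*)). -/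
open scoped RealInnerProductSpace

/-- The auxiliary value `v_f(x, y)`: the inner product of the normalized gradient of `f` at `x`
with `x - y`, and `0` when the gradient vanishes. -/
noncomputable def vf {n : ℕ} (f : EuclideanSpace ℝ (Fin n) → ℝ)
    (x y : EuclideanSpace ℝ (Fin n)) : ℝ :=
  open Classical in
  if gradient f x = 0 then 0
  else ⟪(‖gradient f x‖)⁻¹ • gradient f x, x - y⟫

theorem stmt_0 {n : ℕ} (f : EuclideanSpace ℝ (Fin n) → ℝ)
    (hdiff : Differentiable ℝ f)
    (hquasi : ∀ x y : EuclideanSpace ℝ (Fin n), f y ≤ f x → ⟪gradient f x, y - x⟫ ≤ 0)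
    (xstar : EuclideanSpace ℝ (Fin n))
    (hmin : ∀ y : EuclideanSpace ℝ (Fin n), f xstar ≤ f y)
    (hstrict : ∀ y : EuclideanSpace ℝ (Fin n), gradient f y = 0 → f y = f xstar)
    (ω : ℝ → ℝ)
    (hω : ∀ τ : ℝ, ω τ = sSup {d : ℝ | ∃ x : EuclideanSpace ℝ (Fin n),
      ‖x - xstar‖ ≤ τ ∧ d = f x - f xstar}) :
    ∀ y : EuclideanSpace ℝ (Fin n), f y - f xstar ≤ ω (vf f y xstar) := by
  intro y
  have hcont : Continuous f := hdiff.continuous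
  have hbdd : ∀ τ : ℝ, BddAbove {d : ℝ | ∃ x : EuclideanSpace ℝ (Fin n),
      ‖x - xstar‖ ≤ τ ∧ d = f x - f xstar} := by
    intro τ
    have hc : IsCompact (Metric.closedBall xstar τ) := isCompact_closedBall _ _
    have h2 := hc.bddAbove_image (f := fun x => f x - f xstar) ((hcont.sub continuous_const).continuousOn)
    refine h2.mono ?_
    rintro d ⟨x, hx, rfl⟩
    exact ⟨x, by simpa [Metric.mem_closedBall, dist_eq_norm] using hx, rfl⟩
  by_cases hg : gradient f y = 0
  · have h0 : f y = f xstar := hstrict y hg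
    rw [hω, vf, if_pos hg]
    have hmem : (0:ℝ) ∈ {d : ℝ | ∃ x : EuclideanSpace ℝ (Fin n),
        ‖x - xstar‖ ≤ (0:ℝ) ∧ d = f x - f xstar} := ⟨xstar, by simp, by ring⟩
    have := le_csSup (hbdd 0) hmem
    linarith
  · set g := gradient f y with hgdef
    have hgn : (0:ℝ) < ‖g‖ := norm_pos_iff.mpr hg
    set u : EuclideanSpace ℝ (Fin n) := (‖g‖)⁻¹ • g with hu
    have hvf : vf f y xstar = ⟪u, y - xstar⟫ := by rw [vf, if_neg hg]
    set v : ℝ := ⟪u, y - xstar⟫ with hv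
    have hnu : ‖u‖ = 1 := by
      rw [hu, norm_smul, norm_inv, norm_norm]
      field_simp
    have hgu : ⟪g, u⟫ = ‖g‖ := by
      rw [hu, real_inner_smul_right, real_inner_self_eq_norm_sq]
      field_simp
    have hvg : v * ‖g‖ = ⟪g, y - xstar⟫ := by
      rw [hv, hu, real_inner_smul_left]
      field_simp
    have hneg : ⟪g, xstar - y⟫ = -⟪g, y - xstar⟫ := by
      rw [← inner_neg_right]
      congr 1
      abel
    have hv0 : 0 ≤ v := by
      have h2 := hquasi y xstar (hmin y)
      rw [hneg] at h2
      nlinarith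
    set p : EuclideanSpace ℝ (Fin n) := xstar + v • u with hp
    have hpx : ‖p - xstar‖ = v := by
      have : p - xstar = v • u := by rw [hp]; abel
      rw [this, norm_smul, hnu, mul_one, Real.norm_eq_abs, abs_of_nonneg hv0]
    have key : ∀ ε : ℝ, 0 < ε → f y ≤ f (p + ε • u) := by
      intro ε hε
      by_contra h
      push_neg at h
      have hq := hquasi y (p + ε • u) h.le
      have hcalc : ⟪g, (p + ε • u) - y⟫ = ε * ‖g‖ := by
        have hpt : (p + ε • u) - y = (xstar - y) + (v + ε) • u := by
          rw [hp, add_smul]; abel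
        rw [hpt, inner_add_right, real_inner_smul_right, hgu, hneg]
        nlinarith [hvg]
      rw [hcalc] at hq
      nlinarith
    have hfp : f y ≤ f p := by
      have htend : Filter.Tendsto (fun ε : ℝ => f (p + ε • u)) (nhdsWithin 0 (Set.Ioi 0))
          (nhds (f p)) := by
        have hc : Continuous (fun ε : ℝ => f (p + ε • u)) := by
          exact hcont.comp (continuous_const.add (continuous_id.smul continuous_const))
        have := (hc.tendsto 0).mono_left (nhdsWithin_le_nhds (s := Set.Ioi (0:ℝ)))
        simpa using this
      refine ge_of_tendsto htend ?_
      filter_upwards [self_mem_nhdsWithin] with ε hε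
      exact key ε hε
    have hmem : f p - f xstar ∈ {d : ℝ | ∃ x : EuclideanSpace ℝ (Fin n),
        ‖x - xstar‖ ≤ v ∧ d = f x - f xstar} := ⟨p, hpx.le, rfl⟩
    have := le_csSup (hbdd v) hmem
    rw [hω, hvf]
    linarith
end

section
/- Let f : ℝ^n → ℝ be differentiable and L-smooth with L > 0, let x ∈ ℝ^n, let v ∈ ℝ^n be a unit vector (‖v‖ = 1), and let Δ > 0. If f(x + (2Δ/L) v) ≥ f(x), then ⟨∇f(x), v⟩ ≥ −Δ. -/
open scoped RealInnerProductSpace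

theorem stmt_1 {n : ℕ} (f : EuclideanSpace ℝ (Fin n) → ℝ) (L : ℝ) (hL : 0 < L)
    (hdiff : Differentiable ℝ f)
    (hsmooth : ∀ x y : EuclideanSpace ℝ (Fin n),
      ‖gradient f x - gradient f y‖ ≤ L * ‖x - y‖)
    (x v : EuclideanSpace ℝ (Fin n)) (hv : ‖v‖ = 1) (Δ : ℝ) (hΔ : 0 < Δ)
    (hcomp : f (x + (2 * Δ / L) • v) ≥ f x) :
    ⟪gradient f x, v⟫ ≥ -Δ := by
  set c : ℝ := ⟪gradient f x, v⟫ with hc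
  set t₀ : ℝ := 2 * Δ / L with ht₀
  have ht₀pos : 0 < t₀ := by positivity
  set h : ℝ → ℝ := fun t => f (x + t • v) - t * c - L * t ^ 2 / 2 with hh
  have hder : ∀ t : ℝ, HasDerivAt h (⟪gradient f (x + t • v), v⟫ - c - L * t) t := by
    intro t
    have h1 : HasDerivAt (fun t : ℝ => x + t • v) v t := by
      simpa using ((hasDerivAt_id t).smul_const v).const_add x
    have h2 := ((hdiff (x + t • v)).hasGradientAt.hasFDerivAt).comp_hasDerivAt t h1
    simp only [InnerProductSpace.toDual_apply_apply] at h2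
    have h3 : HasDerivAt (fun t : ℝ => t * c) c t := by
      simpa using (hasDerivAt_id t).mul_const c
    have h4 : HasDerivAt (fun t : ℝ => L * t ^ 2 / 2) (L * t) t := by
      have := ((hasDerivAt_pow 2 t).const_mul L).div_const 2
      refine this.congr_deriv ?_
      ring
    exact (h2.sub h3).sub h4
  have hderle : ∀ t ∈ Set.Ici (0:ℝ), deriv h t ≤ 0 := by
    intro t ht
    rw [(hder t).deriv]
    have key : ⟪gradient f (x + t • v) - gradient f x, v⟫ ≤ L * t := by
      calc ⟪gradient f (x + t • v) - gradient f x, v⟫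
          ≤ ‖gradient f (x + t • v) - gradient f x‖ * ‖v‖ := real_inner_le_norm _ _
        _ ≤ L * ‖(x + t • v) - x‖ * 1 := by
            rw [hv]; exact mul_le_mul_of_nonneg_right (hsmooth _ _) zero_le_one
        _ = L * t := by
            rw [add_sub_cancel_left, norm_smul, hv, mul_one, Real.norm_eq_abs,
              abs_of_nonneg (Set.mem_Ici.mp ht), mul_one]
    rw [inner_sub_left] at key
    linarith
  have hanti : AntitoneOn h (Set.Ici (0:ℝ)) := by
    apply antitoneOn_of_deriv_nonpos (convex_Ici 0)
    · exact fun t _ => (hder t).continuousAt.continuousWithinAt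
    · intro t ht
      exact (hder t).differentiableAt.differentiableWithinAt
    · intro t ht
      exact hderle t (interior_subset ht)
  have hineq : h t₀ ≤ h 0 := hanti (Set.self_mem_Ici) (Set.mem_Ici.mpr ht₀pos.le) ht₀pos.le
  have h0 : h 0 = f x := by simp [hh]
  have hLt₀ : L * t₀ = 2 * Δ := by rw [ht₀]; field_simp
  have : f (x + t₀ • v) - t₀ * c - L * t₀ ^ 2 / 2 ≤ f x := by
    rw [← h0]; exact hineq
  have hfx : f x ≤ f (x + t₀ • v) := hcomp
  have : -(t₀ * c) ≤ L * t₀ ^ 2 / 2 := by linarith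
  have h2 : L * t₀ ^ 2 / 2 = Δ * t₀ := by
    rw [pow_two]; rw [← mul_assoc, hLt₀]; ring
  rw [h2] at this
  have hfin : -c ≤ Δ := by
    have := (mul_le_mul_iff_left₀ ht₀pos).mp (by linarith : -c * t₀ ≤ Δ * t₀)
    linarith
  linarith
end

section
/- Let f : ℝ^n → ℝ be differentiable and L-smooth with L > 0, let x ∈ ℝ^n, let v ∈ ℝ^n be a unit vector (‖v‖ = 1), and let Δ > 0. If f(x + (2Δ/L) v) ≤ f(x), then ⟨∇f(x), v⟩ ≤ Δ. -/
open scoped RealInnerProductSpace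

theorem stmt_2 {n : ℕ} (f : EuclideanSpace ℝ (Fin n) → ℝ) (L : ℝ) (hL : 0 < L)
    (hdiff : Differentiable ℝ f)
    (hsmooth : ∀ x y : EuclideanSpace ℝ (Fin n),
      ‖gradient f x - gradient f y‖ ≤ L * ‖x - y‖)
    (x v : EuclideanSpace ℝ (Fin n)) (hv : ‖v‖ = 1) (Δ : ℝ) (hΔ : 0 < Δ)
    (hcomp : f (x + (2 * Δ / L) • v) ≤ f x) :
    ⟪gradient f x, v⟫ ≤ Δ := by
  set t : ℝ := 2 * Δ / L with htdef
  have ht : 0 < t := by positivity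
  -- inner with gradient equals fderiv applied
  have hinner : ∀ y : EuclideanSpace ℝ (Fin n), ⟪gradient f y, v⟫ = fderiv ℝ f y v := by
    intro y
    simp [gradient, InnerProductSpace.toDual_symm_apply]
  set φ' : ℝ → ℝ := fun s => ⟪gradient f (x + s • v), v⟫ with hφ'def
  have hline : ∀ s : ℝ, HasDerivAt (fun s : ℝ => x + s • v) v s := by
    intro s
    simpa using ((hasDerivAt_id s).smul_const v).const_add x
  have hφ : ∀ s : ℝ, HasDerivAt (fun s : ℝ => f (x + s • v)) (φ' s) s := by
    intro s
    have := (hdiff (x + s • v)).hasFDerivAt.comp_hasDerivAt s (hline s)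
    rw [show φ' s = fderiv ℝ f (x + s • v) v from hinner _]
    exact this
  -- continuity of φ'
  have hgradcont : Continuous (gradient f) := by
    apply LipschitzWith.continuous (K := Real.toNNReal L)
    apply LipschitzWith.of_dist_le_mul
    intro a b
    simpa [dist_eq_norm, Real.coe_toNNReal _ hL.le] using hsmooth a b
  have hφ'cont : Continuous φ' := by
    apply Continuous.inner
    · exact hgradcont.comp (by continuity)
    · exact continuous_const
  -- FTC
  have hFTC : ∫ s in (0:ℝ)..t, φ' s = f (x + t • v) - f x := by
    have := intervalIntegral.integral_eq_sub_of_hasDerivAt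
      (f := fun s : ℝ => f (x + s • v)) (f' := φ') (a := 0) (b := t)
      (fun s _ => hφ s) (hφ'cont.intervalIntegrable 0 t)
    simpa using this
  -- pointwise lower bound on φ'
  have hpt : ∀ s ∈ Set.Icc (0:ℝ) t, φ' 0 - L * s ≤ φ' s := by
    intro s hs
    have h1 : φ' 0 - φ' s = ⟪gradient f (x + (0:ℝ) • v) - gradient f (x + s • v), v⟫ := by
      simp [hφ'def, inner_sub_left]
    have h2 : φ' 0 - φ' s ≤ L * s := by
      rw [h1]
      calc ⟪gradient f (x + (0:ℝ) • v) - gradient f (x + s • v), v⟫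
          ≤ ‖gradient f (x + (0:ℝ) • v) - gradient f (x + s • v)‖ * ‖v‖ :=
            real_inner_le_norm _ _
        _ ≤ L * ‖(x + (0:ℝ) • v) - (x + s • v)‖ * 1 := by
            rw [hv]; exact mul_le_mul_of_nonneg_right (hsmooth _ _) zero_le_one
        _ = L * s := by
            have : (x + (0:ℝ) • v) - (x + s • v) = (-s) • v := by
              module
            rw [this, norm_smul, hv]
            simp [abs_of_nonneg hs.1]
    linarith
  -- integral comparison
  have hmono : ∫ s in (0:ℝ)..t, (φ' 0 - L * s) ≤ ∫ s in (0:ℝ)..t, φ' s := by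
    apply intervalIntegral.integral_mono_on ht.le
    · exact (IntervalIntegrable.sub (intervalIntegrable_const)
        (((continuous_const.mul continuous_id').intervalIntegrable 0 t)))
    · exact hφ'cont.intervalIntegrable 0 t
    · exact hpt
  have hval : ∫ s in (0:ℝ)..t, (φ' 0 - L * s) = t * φ' 0 - L * t ^ 2 / 2 := by
    rw [intervalIntegral.integral_sub (f := fun _ => φ' 0) (g := fun s : ℝ => L * s)
      intervalIntegrable_const
      (((continuous_const.mul continuous_id').intervalIntegrable 0 t))]
    rw [intervalIntegral.integral_const_mul]
    simp [integral_id]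
    ring
  have hφ'0 : φ' 0 = ⟪gradient f x, v⟫ := by simp [hφ'def]
  have hle : t * φ' 0 - L * t ^ 2 / 2 ≤ 0 := by
    rw [← hval]
    calc _ ≤ ∫ s in (0:ℝ)..t, φ' s := hmono
      _ = f (x + t • v) - f x := hFTC
      _ ≤ 0 := by linarith [hcomp]
  have hLt : L * t = 2 * Δ := by
    rw [htdef]
    field_simp
  nlinarith [hle, hφ'0, ht]
end

section
/- Let n ≥ 1, let 0 < δ ≤ 1 and γ > 0, and set Δ = δγ/(4 n^{3/2}). Let g = (g_1, …, g_n) ∈ ℝ^n satisfy ‖g‖ ≥ γ and g_i ≥ −Δ for all i ∈ {1, …, n}. Suppose i* ∈ {1, …, n} satisfies g_{i*} ≥ g_i − √2·Δ for all i, and suppose α = (α_1, …, α_n) ∈ ℝ^n satisfies α_{i*} = 1, α_i ∈ [0, 1] for all i ≠ i*, and |α_i g_{i*} − g_i| ≤ √2·Δ for all i ≠ i*. Then ‖ α/‖α‖ − g/‖g‖ ‖ ≤ δ. -/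
/-- Auxiliary: stability of normalized direction. -/
lemma aux_dir {E : Type*} [NormedAddCommGroup E] [NormedSpace ℝ E] (a b : E) (hb : b ≠ 0) :
    ‖(‖a‖)⁻¹ • a - (‖b‖)⁻¹ • b‖ ≤ 2 * ‖a - b‖ / ‖b‖ := by
  have hrb : (0:ℝ) < ‖b‖ := norm_pos_iff.mpr hb
  rcases eq_or_ne a 0 with rfl | ha
  · simp only [norm_zero, inv_zero, zero_smul, zero_sub, norm_neg, norm_smul, norm_inv,
      norm_norm, zero_sub, norm_neg]
    rw [mul_div_assoc, div_self (ne_of_gt hrb), inv_mul_cancel₀ (ne_of_gt hrb)]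
    norm_num
  · have hra : (0:ℝ) < ‖a‖ := norm_pos_iff.mpr ha
    have hdecomp : (‖a‖)⁻¹ • a - (‖b‖)⁻¹ • b
        = (‖b‖)⁻¹ • (a - b) + ((‖a‖)⁻¹ - (‖b‖)⁻¹) • a := by
      rw [smul_sub, sub_smul]; abel
    rw [hdecomp]
    have h1 : ‖(‖b‖)⁻¹ • (a - b)‖ = ‖a - b‖ / ‖b‖ := by
      rw [norm_smul, norm_inv, norm_norm, inv_mul_eq_div]
    have h2 : ‖((‖a‖)⁻¹ - (‖b‖)⁻¹) • a‖ = |‖b‖ - ‖a‖| / ‖b‖ := by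
      rw [norm_smul, Real.norm_eq_abs, inv_sub_inv (ne_of_gt hra) (ne_of_gt hrb),
        abs_div, abs_of_pos (mul_pos hra hrb)]
      field_simp
    have h3 : |‖b‖ - ‖a‖| ≤ ‖a - b‖ := by
      rw [abs_sub_comm]
      exact abs_norm_sub_norm_le a b
    calc ‖(‖b‖)⁻¹ • (a - b) + ((‖a‖)⁻¹ - (‖b‖)⁻¹) • a‖
        ≤ ‖(‖b‖)⁻¹ • (a - b)‖ + ‖((‖a‖)⁻¹ - (‖b‖)⁻¹) • a‖ := norm_add_le _ _
      _ = ‖a - b‖ / ‖b‖ + |‖b‖ - ‖a‖| / ‖b‖ := by rw [h1, h2]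
      _ ≤ ‖a - b‖ / ‖b‖ + ‖a - b‖ / ‖b‖ := by
          gcongr
      _ = 2 * ‖a - b‖ / ‖b‖ := by ring

set_option maxHeartbeats 1000000 in
theorem stmt_3 {n : ℕ} (hn : 1 ≤ n) (δ γ : ℝ) (hδ : 0 < δ) (hδ1 : δ ≤ 1) (hγ : 0 < γ)
    (Δ : ℝ) (hΔ : Δ = δ * γ / (4 * (n : ℝ) ^ ((3 : ℝ) / 2)))
    (g : EuclideanSpace ℝ (Fin n)) (hg : γ ≤ ‖g‖)
    (hgi : ∀ i : Fin n, -Δ ≤ g i)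
    (istar : Fin n) (histar : ∀ i : Fin n, g i - Real.sqrt 2 * Δ ≤ g istar)
    (α : EuclideanSpace ℝ (Fin n)) (hαstar : α istar = 1)
    (hα01 : ∀ i : Fin n, i ≠ istar → α i ∈ Set.Icc (0 : ℝ) 1)
    (hα : ∀ i : Fin n, i ≠ istar → |α i * g istar - g i| ≤ Real.sqrt 2 * Δ) :
    ‖(‖α‖)⁻¹ • α - (‖g‖)⁻¹ • g‖ ≤ δ := by
  set s := Real.sqrt n with hs
  have hn1 : (1:ℝ) ≤ (n:ℝ) := by exact_mod_cast hn
  have hs1 : (1:ℝ) ≤ s := by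
    rw [hs, show (1:ℝ) = Real.sqrt 1 by simp]
    exact Real.sqrt_le_sqrt hn1
  have hs2 : s ^ 2 = (n:ℝ) := Real.sq_sqrt (by linarith)
  set q := Real.sqrt 2 with hq
  have hq2 : q ^ 2 = 2 := Real.sq_sqrt (by norm_num)
  have hq1 : 1 ≤ q ∧ q ≤ 3/2 := by
    constructor <;> nlinarith [Real.sqrt_nonneg 2]
  -- rewrite the rpow
  have hrpow : (n:ℝ) ^ ((3:ℝ)/2) = (n:ℝ) * s := by
    rw [show ((3:ℝ)/2) = 1 + 1/2 by norm_num, Real.rpow_add (by linarith), Real.rpow_one,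
      hs, Real.sqrt_eq_rpow]
  have hΔ' : 4 * ((n:ℝ) * s) * Δ = δ * γ := by
    rw [hΔ, hrpow]
    field_simp
  have hΔpos : 0 < Δ := by
    rw [hΔ, hrpow]
    positivity
  have hgpos : 0 < ‖g‖ := lt_of_lt_of_le hγ hg
  -- g istar is large
  have hnorm_g_sq : ‖g‖ ^ 2 = ∑ i, (g i) ^ 2 := by
    rw [EuclideanSpace.norm_eq, Real.sq_sqrt (by positivity)]
    congr 1; ext i; rw [Real.norm_eq_abs, sq_abs]
  have hexists : ∃ i : Fin n, γ ^ 2 / n ≤ (g i) ^ 2 := by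
    have hne : (Finset.univ : Finset (Fin n)).Nonempty := by
      rw [Finset.univ_nonempty_iff]
      exact Fin.pos_iff_nonempty.mp hn
    have hsum : ∑ _i : Fin n, γ ^ 2 / (n:ℝ) ≤ ∑ i, (g i) ^ 2 := by
      rw [Finset.sum_const, Finset.card_univ, Fintype.card_fin, nsmul_eq_mul]
      rw [← hnorm_g_sq]
      rw [mul_div_cancel₀ _ (by positivity : (n:ℝ) ≠ 0)]
      nlinarith
    obtain ⟨i, _, hi⟩ := Finset.exists_le_of_sum_le hne hsum
    exact ⟨i, hi⟩
  have hDsmall : q * Δ < γ / s / 2 := by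
    -- 4 n s Δ = δ γ ≤ γ, so Δ ≤ γ/(4 n s); q Δ ≤ (3/2) γ/(4ns) = 3γ/(8ns) < γ/(2s)
    have h1 : 4 * ((n:ℝ) * s) * Δ ≤ γ := by
      rw [hΔ']; nlinarith
    rw [div_div, lt_div_iff₀ (by nlinarith : (0:ℝ) < s * 2)]
    nlinarith [hq1.1, hq1.2]
  have hgistar : γ / s - q * Δ ≤ g istar := by
    obtain ⟨i, hi⟩ := hexists
    have hgi2 : γ / s ≤ g i := by
      have h1 : (γ / s) ^ 2 ≤ (g i) ^ 2 := by
        rw [div_pow, hs2]; exact hi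
      have h2 : -Δ ≤ g i := hgi i
      have hcs : 0 < γ / s := by positivity
      have hΔq : Δ < γ / s := by nlinarith [hq1.1, hΔpos]
      by_contra hcon
      push_neg at hcon
      nlinarith [mul_pos (by linarith : 0 < γ / s - g i) (by linarith : 0 < γ / s + g i)]
    linarith [histar i]
  have hgistar_pos : 0 < g istar := by
    have : γ / s / 2 < γ / s := by
      have : 0 < γ / s := by positivity
      linarith
    linarith
  -- the vector a := g istar • α
  set a : EuclideanSpace ℝ (Fin n) := g istar • α with ha
  have hαnorm : 1 ≤ ‖α‖ := by
    rw [EuclideanSpace.norm_eq]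
    rw [show (1:ℝ) = Real.sqrt 1 by simp]
    apply Real.sqrt_le_sqrt
    calc (1:ℝ) = ‖α istar‖ ^ 2 := by rw [hαstar]; simp
      _ ≤ ∑ i : Fin n, ‖α i‖ ^ 2 := Finset.single_le_sum (f := fun i => ‖α i‖ ^ 2) (fun i _ => by positivity) (Finset.mem_univ _)
  have hαpos : 0 < ‖α‖ := lt_of_lt_of_le one_pos hαnorm
  -- ‖a - g‖ ≤ q * s * Δ
  have hag : ‖a - g‖ ≤ q * s * Δ := by
    have hcoord : ∀ i : Fin n, ‖(a - g) i‖ ^ 2 ≤ (q * Δ) ^ 2 := by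
      intro i
      have : (a - g) i = g istar * α i - g i := by
        simp [ha, PiLp.sub_apply, PiLp.smul_apply, smul_eq_mul]
      rw [this, Real.norm_eq_abs, sq_abs]
      rcases eq_or_ne i istar with rfl | hne
      · rw [hαstar]; simp
        positivity
      · have := hα i hne
        rw [mul_comm (g istar) (α i)]
        nlinarith [abs_nonneg (α i * g istar - g i), sq_abs (α i * g istar - g i),
          mul_pos hΔpos (lt_of_lt_of_le one_pos hq1.1)]
    rw [EuclideanSpace.norm_eq]
    have hsum : ∑ i, ‖(a - g) i‖ ^ 2 ≤ (q * s * Δ) ^ 2 := by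
      calc ∑ i, ‖(a - g) i‖ ^ 2 ≤ ∑ _i : Fin n, (q * Δ) ^ 2 :=
            Finset.sum_le_sum (fun i _ => hcoord i)
        _ = (n:ℝ) * (q * Δ) ^ 2 := by
            rw [Finset.sum_const, Finset.card_univ, Fintype.card_fin, nsmul_eq_mul]
        _ = (q * s * Δ) ^ 2 := by nlinarith
    calc Real.sqrt (∑ i, ‖(a - g) i‖ ^ 2) ≤ Real.sqrt ((q * s * Δ) ^ 2) :=
          Real.sqrt_le_sqrt hsum
      _ = q * s * Δ := Real.sqrt_sq (by positivity)
  -- normalized a equals normalized α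
  have hkey : (‖a‖)⁻¹ • a = (‖α‖)⁻¹ • α := by
    have hna : ‖a‖ = g istar * ‖α‖ := by
      rw [ha, norm_smul, Real.norm_eq_abs, abs_of_pos hgistar_pos]
    rw [ha, hna, mul_inv, smul_smul]
    rw [mul_comm (g istar)⁻¹ (‖α‖)⁻¹, mul_assoc, inv_mul_cancel₀ (ne_of_gt hgistar_pos),
      mul_one]
  rw [← hkey]
  have hgne : g ≠ 0 := by
    intro h
    rw [h, norm_zero] at hgpos
    exact lt_irrefl 0 hgpos
  calc ‖(‖a‖)⁻¹ • a - (‖g‖)⁻¹ • g‖ ≤ 2 * ‖a - g‖ / ‖g‖ := aux_dir a g hgne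
    _ ≤ 2 * (q * s * Δ) / γ := by
        apply div_le_div₀ (by positivity) (by linarith) hγ hg
    _ ≤ δ := by
        rw [div_le_iff₀ hγ]
        -- 2 q s Δ ≤ δ γ = 4 n s Δ,  i.e. 2 q ≤ 4 n, true since q ≤ 3/2, n ≥ 1
        rw [← hΔ']
        nlinarith [hq1.2, mul_pos hΔpos (lt_of_lt_of_le one_pos hs1)]
end

section
/- Let f : ℝ^n → ℝ be differentiable, let x, x* ∈ ℝ^n with ∇f(x) ≠ 0 and ‖x − x*‖ ≤ D for some D > 0, let 0 ≤ δ, and let g̃ ∈ ℝ^n satisfy ‖g̃‖ = 1 and ‖g̃ − ∇f(x)/‖∇f(x)‖‖ ≤ δ. Let h > 0 and set x₊ = x − h·g̃. Then v_f(x, x*) ≤ (1/(2h))(‖x − x*‖² − ‖x₊ − x*‖²) + h/2 + δD. -/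
open scoped RealInnerProductSpace

theorem stmt_5 {n : ℕ} (f : EuclideanSpace ℝ (Fin n) → ℝ)
    (hdiff : Differentiable ℝ f)
    (x xstar : EuclideanSpace ℝ (Fin n)) (hgrad : gradient f x ≠ 0)
    (D : ℝ) (hD : 0 < D) (hxD : ‖x - xstar‖ ≤ D)
    (δ : ℝ) (hδ : 0 ≤ δ)
    (gtilde : EuclideanSpace ℝ (Fin n)) (hgt1 : ‖gtilde‖ = 1)
    (hgtδ : ‖gtilde - (‖gradient f x‖)⁻¹ • gradient f x‖ ≤ δ)
    (h : ℝ) (hh : 0 < h)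
    (xplus : EuclideanSpace ℝ (Fin n)) (hxplus : xplus = x - h • gtilde) :
    vf f x xstar ≤ (1 / (2 * h)) * (‖x - xstar‖ ^ 2 - ‖xplus - xstar‖ ^ 2) + h / 2 + δ * D := by
  set u : EuclideanSpace ℝ (Fin n) := (‖gradient f x‖)⁻¹ • gradient f x with hu
  have hvf : vf f x xstar = ⟪u, x - xstar⟫ := by
    simp [vf, hgrad, hu]
  -- key norm identity
  have hnorm : ‖xplus - xstar‖ ^ 2
      = ‖x - xstar‖ ^ 2 - 2 * h * ⟪gtilde, x - xstar⟫ + h ^ 2 := by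
    have : xplus - xstar = (x - xstar) - h • gtilde := by
      rw [hxplus]; abel
    rw [this, norm_sub_sq_real, real_inner_smul_right, norm_smul, real_inner_comm]
    simp [hgt1, abs_of_pos hh]
    ring
  have hgt : ⟪gtilde, x - xstar⟫
      = (1 / (2 * h)) * (‖x - xstar‖ ^ 2 - ‖xplus - xstar‖ ^ 2) + h / 2 := by
    rw [hnorm]; field_simp; ring
  have hcs : ⟪u - gtilde, x - xstar⟫ ≤ δ * D := by
    calc ⟪u - gtilde, x - xstar⟫ ≤ ‖u - gtilde‖ * ‖x - xstar‖ :=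
          real_inner_le_norm _ _
      _ ≤ δ * D := by
          apply mul_le_mul _ hxD (norm_nonneg _) hδ
          rwa [← norm_neg, neg_sub]
  have : ⟪u, x - xstar⟫ = ⟪gtilde, x - xstar⟫ + ⟪u - gtilde, x - xstar⟫ := by
    rw [← inner_add_left]; congr 1; abel
  rw [hvf, this, hgt]
  linarith
end

section
/- Let N ≥ 1 be a natural number, D > 0, and 0 ≤ δ ≤ 1, and set h_k = D/√(2k) for k = 1, …, N. Let a_1, …, a_{N+1} be real numbers with 0 ≤ a_k ≤ D² for all k, and let v_1, …, v_N be real numbers satisfying v_k ≤ (1/(2 h_k))(a_k − a_{k+1}) + h_k/2 + δD for each k = 1, …, N. Then the sum v_1 + … + v_N ≤ (3D√N)/√2 + δDN, and consequently min_{1 ≤ k ≤ N} v_k ≤ 3D/√(2N) + δD. -/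
lemma sum_inv_sqrt_le (N : ℕ) : ∑ k ∈ Finset.Icc 1 N, (1:ℝ)/Real.sqrt k ≤ 2 * Real.sqrt N := by
  induction N with
  | zero => simp
  | succ n ih =>
    rw [Finset.sum_Icc_succ_top (by omega)]
    have h1 : Real.sqrt n ≤ Real.sqrt (n+1) := by
      apply Real.sqrt_le_sqrt; push_cast; linarith
    have h2 : (0:ℝ) < Real.sqrt (n+1) := by positivity
    have key : (1:ℝ)/Real.sqrt (n+1) ≤ 2 * Real.sqrt (n+1) - 2 * Real.sqrt n := by
      rw [div_le_iff₀ h2]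
      have hs : Real.sqrt (n+1) * Real.sqrt (n+1) = (n:ℝ)+1 :=
        Real.mul_self_sqrt (by positivity)
      have hsn : Real.sqrt n * Real.sqrt n = (n:ℝ) :=
        Real.mul_self_sqrt (by positivity)
      nlinarith [sq_nonneg (Real.sqrt (n+1) - Real.sqrt n)]
    push_cast at key ⊢
    linarith

lemma telescope_le (a c : ℕ → ℝ) (D2 : ℝ)
    (hc : ∀ k, 1 ≤ k → c k ≤ c (k+1)) (hc0 : 0 ≤ c 1) :
    ∀ N, 1 ≤ N → (∀ k ∈ Finset.Icc 1 (N+1), 0 ≤ a k ∧ a k ≤ D2) →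
    ∑ k ∈ Finset.Icc 1 N, c k * (a k - a (k+1)) ≤ c N * D2 - c N * a (N+1) := by
  intro N
  induction N with
  | zero => intro h; omega
  | succ n ih =>
    intro _ hb
    rcases Nat.eq_or_lt_of_le (Nat.one_le_iff_ne_zero.mpr (Nat.succ_ne_zero n)) with h1 | h1
    · -- n = 0
      have hn : n = 0 := by omega
      subst hn
      simp only [Finset.Icc_self, Finset.sum_singleton]
      have := hb 1 (by simp)
      nlinarith
    · have hn1 : 1 ≤ n := by omega
      rw [Finset.sum_Icc_succ_top (by omega)]
      have hb' : ∀ k ∈ Finset.Icc 1 (n+1), 0 ≤ a k ∧ a k ≤ D2 := by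
        intro k hk; apply hb; simp at hk ⊢; omega
      have hih := ih hn1 hb'
      have hm := hc n hn1
      have ha1 := hb (n+1) (by simp)
      have ha2 := hb (n+2) (by simp)
      have hcn0 : 0 ≤ c n := by
        have : ∀ m, 1 ≤ m → c 1 ≤ c m := by
          intro m hm
          induction m with
          | zero => omega
          | succ p ihp =>
            rcases Nat.lt_or_ge p 1 with h | h
            · interval_cases p; · simp
            · exact le_trans (ihp h) (hc p h)
        linarith [this n hn1]
      nlinarith

theorem stmt_6 (N : ℕ) (hN : 1 ≤ N) (D δ : ℝ) (hD : 0 < D) (hδ0 : 0 ≤ δ) (hδ1 : δ ≤ 1)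
    (h : ℕ → ℝ) (hh : ∀ k, h k = D / Real.sqrt (2 * k))
    (a : ℕ → ℝ) (ha0 : ∀ k ∈ Finset.Icc 1 (N + 1), 0 ≤ a k)
    (haD : ∀ k ∈ Finset.Icc 1 (N + 1), a k ≤ D ^ 2)
    (v : ℕ → ℝ)
    (hv : ∀ k ∈ Finset.Icc 1 N,
      v k ≤ (1 / (2 * h k)) * (a k - a (k + 1)) + h k / 2 + δ * D) :
    (∑ k ∈ Finset.Icc 1 N, v k) ≤ 3 * D * Real.sqrt N / Real.sqrt 2 + δ * D * N ∧
    ((Finset.Icc 1 N).inf' (Finset.nonempty_Icc.mpr hN) v ≤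
      3 * D / Real.sqrt (2 * N) + δ * D) := by
  set c : ℕ → ℝ := fun k => Real.sqrt (2 * k) / (2 * D) with hc_def
  have s2 : Real.sqrt 2 * Real.sqrt 2 = 2 := Real.mul_self_sqrt (by norm_num)
  have s2pos : (0:ℝ) < Real.sqrt 2 := by positivity
  have sqrt2k : ∀ k : ℕ, Real.sqrt (2 * k) = Real.sqrt 2 * Real.sqrt k := by
    intro k; rw [show ((2:ℝ) * k) = 2 * (k:ℝ) by push_cast; ring, Real.sqrt_mul (by norm_num)]
  have hinv : ∀ k : ℕ, 1 ≤ k → 1 / (2 * h k) = c k := by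
    intro k hk
    have hk0 : (0:ℝ) < Real.sqrt (2 * k) := by
      apply Real.sqrt_pos.mpr; push_cast
      have : (1:ℝ) ≤ (k:ℝ) := by exact_mod_cast hk
      linarith
    rw [hh k, hc_def]
    field_simp
  -- telescoping bound
  have hc_mono : ∀ k, 1 ≤ k → c k ≤ c (k+1) := by
    intro k _
    have : Real.sqrt (2*k) ≤ Real.sqrt (2*(k+1)) := by
      apply Real.sqrt_le_sqrt; push_cast; linarith
    simp only [hc_def]
    gcongr
    push_cast; linarith
  have hc0 : 0 ≤ c 1 := by positivity
  have hab : ∀ k ∈ Finset.Icc 1 (N+1), 0 ≤ a k ∧ a k ≤ D^2 := fun k hk => ⟨ha0 k hk, haD k hk⟩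
  have htel : ∑ k ∈ Finset.Icc 1 N, c k * (a k - a (k+1)) ≤ c N * D^2 - c N * a (N+1) :=
    telescope_le a c (D^2) hc_mono hc0 N hN hab
  have hcN0 : 0 ≤ c N := by positivity
  have haN1 : 0 ≤ a (N+1) := ha0 (N+1) (by simp)
  have sNpos : (0:ℝ) < Real.sqrt N := by
    apply Real.sqrt_pos.mpr
    have : (1:ℝ) ≤ (N:ℝ) := by exact_mod_cast hN
    linarith
  have sN2 : Real.sqrt N * Real.sqrt N = (N:ℝ) := Real.mul_self_sqrt (by positivity)
  have hT1 : c N * D^2 = D * Real.sqrt N / Real.sqrt 2 := by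
    simp only [hc_def]
    rw [sqrt2k N]
    field_simp
    linear_combination s2
  -- step sum bound
  have hT2 : ∑ k ∈ Finset.Icc 1 N, h k / 2 ≤ D * Real.sqrt N / Real.sqrt 2 := by
    have heq : ∀ k ∈ Finset.Icc 1 N, h k / 2 = (D / (2 * Real.sqrt 2)) * (1 / Real.sqrt k) := by
      intro k hk
      simp only [Finset.mem_Icc] at hk
      rw [hh k, sqrt2k k]
      have skpos : (0:ℝ) < Real.sqrt k := by
        apply Real.sqrt_pos.mpr
        have : (1:ℝ) ≤ (k:ℝ) := by exact_mod_cast hk.1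
        linarith
      rw [div_div, div_mul_div_comm, mul_one]
      ring_nf
    rw [Finset.sum_congr rfl heq, ← Finset.mul_sum]
    have hsum := sum_inv_sqrt_le N
    have hcoef : (0:ℝ) ≤ D / (2 * Real.sqrt 2) := by positivity
    calc (D / (2 * Real.sqrt 2)) * ∑ k ∈ Finset.Icc 1 N, (1:ℝ)/Real.sqrt k
        ≤ (D / (2 * Real.sqrt 2)) * (2 * Real.sqrt N) := by
          exact mul_le_mul_of_nonneg_left hsum hcoef
      _ = D * Real.sqrt N / Real.sqrt 2 := by field_simp
  have hsumv : (∑ k ∈ Finset.Icc 1 N, v k) ≤ 2 * D * Real.sqrt N / Real.sqrt 2 + δ * D * N := by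
    have hstep : (∑ k ∈ Finset.Icc 1 N, v k) ≤
        ∑ k ∈ Finset.Icc 1 N, (c k * (a k - a (k+1)) + h k / 2 + δ * D) := by
      apply Finset.sum_le_sum
      intro k hk
      have hk1 : 1 ≤ k := (Finset.mem_Icc.mp hk).1
      have := hv k hk
      rwa [hinv k hk1] at this
    have hsplit : ∑ k ∈ Finset.Icc 1 N, (c k * (a k - a (k+1)) + h k / 2 + δ * D) =
        (∑ k ∈ Finset.Icc 1 N, c k * (a k - a (k+1))) + (∑ k ∈ Finset.Icc 1 N, h k / 2)
        + N * (δ * D) := by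
      rw [Finset.sum_add_distrib, Finset.sum_add_distrib, Finset.sum_const,
        Nat.card_Icc]
      simp [nsmul_eq_mul]
    rw [hsplit] at hstep
    have h1 : (∑ k ∈ Finset.Icc 1 N, c k * (a k - a (k+1))) ≤ D * Real.sqrt N / Real.sqrt 2 := by
      nlinarith
    have hring : 2 * D * Real.sqrt N / Real.sqrt 2 =
        D * Real.sqrt N / Real.sqrt 2 + D * Real.sqrt N / Real.sqrt 2 := by ring
    linarith
  have hmain : (∑ k ∈ Finset.Icc 1 N, v k) ≤ 3 * D * Real.sqrt N / Real.sqrt 2 + δ * D * N := by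
    have hpos : 0 ≤ D * Real.sqrt N / Real.sqrt 2 := by positivity
    have hring : 3 * D * Real.sqrt N / Real.sqrt 2 =
        2 * D * Real.sqrt N / Real.sqrt 2 + D * Real.sqrt N / Real.sqrt 2 := by ring
    linarith
  refine ⟨hmain, ?_⟩
  -- min via average
  set m := (Finset.Icc 1 N).inf' (Finset.nonempty_Icc.mpr hN) v with hm_def
  have hNm : (N:ℝ) * m ≤ ∑ k ∈ Finset.Icc 1 N, v k := by
    have := Finset.card_nsmul_le_sum (Finset.Icc 1 N) v m
      (fun i hi => Finset.inf'_le v hi)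
    rwa [Nat.card_Icc, Nat.add_sub_cancel, nsmul_eq_mul] at this
  have hNpos : (0:ℝ) < N := by exact_mod_cast hN
  have hkey2 : 3 * D / (Real.sqrt 2 * Real.sqrt N) * N = 3 * D * Real.sqrt N / Real.sqrt 2 := by
    field_simp
    linear_combination (-1) * sN2
  have key : m * N ≤ (3 * D / Real.sqrt (2 * N) + δ * D) * N := by
    rw [sqrt2k N]
    calc m * (N:ℝ) = (N:ℝ) * m := by ring
      _ ≤ 3 * D * Real.sqrt N / Real.sqrt 2 + δ * D * N := le_trans hNm hmain
      _ = (3 * D / (Real.sqrt 2 * Real.sqrt N) + δ * D) * N := by rw [← hkey2]; ring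
  have := le_of_mul_le_mul_right key hNpos
  rwa [hm_def] at this
end

section
/- Let f : ℝ^n → ℝ be differentiable, let x* ∈ ℝ^n, let D > 0 and ε > 0 with ε ≤ 2D, and set δ = ε/(2D). Let N be a natural number with N ≥ 18 D²/ε². Let x_1, x_2, …, x_{N+1} ∈ ℝ^n and ĝ_1, …, ĝ_N ∈ ℝ^n satisfy, for each k = 1, …, N: x_{k+1} = x_k − h_k ĝ_k with h_k = D/√(2k); ∇f(x_k) ≠ 0; ‖ĝ_k‖ = 1; ‖ĝ_k − ∇f(x_k)/‖∇f(x_k)‖‖ ≤ δ; and ‖x_k − x*‖ ≤ D. Then min_{1 ≤ k ≤ N} v_f(x_k, x*) ≤ ε. -/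
open scoped RealInnerProductSpace

/-- Abel-summation type bound for a telescoping sum with nondecreasing nonnegative weights. -/
lemma abel_sum_aux (a b : ℕ → ℝ) (C : ℝ) :
    ∀ N, 1 ≤ N →
    (∀ k, 1 ≤ k → k < N → b k ≤ b (k + 1)) →
    (∀ k, 1 ≤ k → k ≤ N → 0 ≤ b k) →
    (∀ k, 1 ≤ k → k ≤ N → a k ≤ C) →
    (∀ k, 1 ≤ k → k ≤ N + 1 → 0 ≤ a k) →
    ∑ k ∈ Finset.Icc 1 N, b k * (a k - a (k + 1)) ≤ C * b N - b N * a (N + 1) := by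
  intro N
  induction N with
  | zero => intro hN; omega
  | succ n ih =>
    intro hN hmono hb haC ha0
    rcases Nat.eq_or_lt_of_le hN with hn1 | hn1
    · simp only [← hn1, Finset.Icc_self, Finset.sum_singleton]
      nlinarith [hb 1 le_rfl (by omega), haC 1 le_rfl (by omega), ha0 2 (by norm_num) (by omega)]
    · have hn : 1 ≤ n := by omega
      have H := ih hn (fun k h1 h2 => hmono k h1 (by omega)) (fun k h1 h2 => hb k h1 (by omega))
        (fun k h1 h2 => haC k h1 (by omega)) (fun k h1 h2 => ha0 k h1 (by omega))
      rw [Finset.sum_Icc_succ_top (by omega : 1 ≤ n + 1)]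
      nlinarith [hmono n hn (by omega), hb (n+1) (by omega) (by omega),
        haC (n+1) (by omega) (by omega), ha0 (n+1) (by omega) (by omega),
        ha0 (n+2) (by omega) (by omega), hb n hn (by omega),
        mul_nonneg (sub_nonneg.2 (hmono n hn (by omega)))
          (sub_nonneg.2 (haC (n+1) (by omega) (by omega)))]

/-- `∑_{k=1}^N 1/√k ≤ 2√N`. -/
lemma sqrt_inv_sum_aux (N : ℕ) :
    ∑ k ∈ Finset.Icc 1 N, (Real.sqrt k)⁻¹ ≤ 2 * Real.sqrt N := by
  induction N with
  | zero => simp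
  | succ n ih =>
    rw [Finset.sum_Icc_succ_top (by omega : 1 ≤ n + 1)]
    have hs : Real.sqrt n ^ 2 = (n : ℝ) := Real.sq_sqrt (by positivity)
    have ht : Real.sqrt ((n : ℝ) + 1) ^ 2 = (n : ℝ) + 1 := Real.sq_sqrt (by positivity)
    have ht0 : 0 < Real.sqrt ((n : ℝ) + 1) := Real.sqrt_pos.2 (by positivity)
    have hs0 : 0 ≤ Real.sqrt n := Real.sqrt_nonneg _
    have h1 : (Real.sqrt ((n : ℝ) + 1))⁻¹ * Real.sqrt ((n : ℝ) + 1) = 1 :=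
      inv_mul_cancel₀ ht0.ne'
    have hinv0 : 0 ≤ (Real.sqrt ((n : ℝ) + 1))⁻¹ := by positivity
    push_cast
    nlinarith [sq_nonneg (Real.sqrt ((n:ℝ)+1) - Real.sqrt n), ih, ht0, hs0, hs, ht, h1, hinv0]

theorem stmt_9 {n : ℕ} (f : EuclideanSpace ℝ (Fin n) → ℝ)
    (hdiff : Differentiable ℝ f)
    (xstar : EuclideanSpace ℝ (Fin n))
    (D ε : ℝ) (hD : 0 < D) (hε : 0 < ε) (hεD : ε ≤ 2 * D)
    (δ : ℝ) (hδ : δ = ε / (2 * D))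
    (N : ℕ) (hNbig : 18 * D ^ 2 / ε ^ 2 ≤ (N : ℝ))
    (h : ℕ → ℝ) (hh : ∀ k, h k = D / Real.sqrt (2 * k))
    (x : ℕ → EuclideanSpace ℝ (Fin n)) (ghat : ℕ → EuclideanSpace ℝ (Fin n))
    (hupd : ∀ k ∈ Finset.Icc 1 N, x (k + 1) = x k - h k • ghat k)
    (hgrad : ∀ k ∈ Finset.Icc 1 N, gradient f (x k) ≠ 0)
    (hg1 : ∀ k ∈ Finset.Icc 1 N, ‖ghat k‖ = 1)
    (hgδ : ∀ k ∈ Finset.Icc 1 N,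
      ‖ghat k - (‖gradient f (x k)‖)⁻¹ • gradient f (x k)‖ ≤ δ)
    (hxD : ∀ k ∈ Finset.Icc 1 N, ‖x k - xstar‖ ≤ D) :
    (Finset.Icc 1 N).inf'
      (Finset.nonempty_Icc.mpr
        (Nat.cast_pos (α := ℝ) |>.mp (lt_of_lt_of_le (by positivity) hNbig)))
      (fun k => vf f (x k) xstar) ≤ ε := by
  have hN0 : (0:ℝ) < (N:ℝ) := lt_of_lt_of_le (by positivity) hNbig
  have hN1 : 1 ≤ N := Nat.cast_pos.mp hN0
  have hδpos : 0 ≤ δ := by rw [hδ]; positivity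
  have hδD : δ * D = ε / 2 := by rw [hδ]; field_simp
  set a : ℕ → ℝ := fun k => ‖x k - xstar‖ ^ 2 with ha_def
  -- positivity of the steps
  have hhk : ∀ k : ℕ, 1 ≤ k → 0 < h k := by
    intro k hk1
    rw [hh]
    have : (0:ℝ) < Real.sqrt (2 * k) := Real.sqrt_pos.2 (by
      have : (1:ℝ) ≤ (k:ℝ) := by exact_mod_cast hk1
      linarith)
    positivity
  -- the key per-step inequality
  have key : ∀ k ∈ Finset.Icc 1 N,
      vf f (x k) xstar ≤ (2 * h k)⁻¹ * (a k - a (k+1)) + h k / 2 + δ * D := by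
    intro k hk
    obtain ⟨hk1, hkN⟩ := Finset.mem_Icc.mp hk
    have hg0 : gradient f (x k) ≠ 0 := hgrad k hk
    have hw : ‖x k - xstar‖ ≤ D := hxD k hk
    have hkpos : 0 < h k := hhk k hk1
    have hexp : a (k+1) = a k - 2 * h k * ⟪x k - xstar, ghat k⟫ + h k ^ 2 := by
      have hx1 : x (k+1) - xstar = (x k - xstar) - h k • ghat k := by
        rw [hupd k hk]; abel
      simp only [ha_def]
      rw [hx1, norm_sub_sq_real, real_inner_smul_right, norm_smul, hg1 k hk]
      simp [abs_of_pos hkpos]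
      ring
    have hub : ⟪(‖gradient f (x k)‖)⁻¹ • gradient f (x k), x k - xstar⟫
        ≤ ⟪x k - xstar, ghat k⟫ + δ * D := by
      have h1 : ⟪(‖gradient f (x k)‖)⁻¹ • gradient f (x k) - ghat k, x k - xstar⟫ ≤ δ * D := by
        calc ⟪(‖gradient f (x k)‖)⁻¹ • gradient f (x k) - ghat k, x k - xstar⟫
            ≤ ‖(‖gradient f (x k)‖)⁻¹ • gradient f (x k) - ghat k‖ * ‖x k - xstar‖ :=
              real_inner_le_norm _ _
          _ ≤ δ * D := mul_le_mul (by rw [norm_sub_rev]; exact hgδ k hk) hw (norm_nonneg _) hδpos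
      have h2 : ⟪(‖gradient f (x k)‖)⁻¹ • gradient f (x k) - ghat k, x k - xstar⟫
          = ⟪(‖gradient f (x k)‖)⁻¹ • gradient f (x k), x k - xstar⟫
            - ⟪ghat k, x k - xstar⟫ := inner_sub_left _ _ _
      have h3 : ⟪ghat k, x k - xstar⟫ = ⟪x k - xstar, ghat k⟫ := real_inner_comm _ _
      linarith
    have hv : vf f (x k) xstar
        = ⟪(‖gradient f (x k)‖)⁻¹ • gradient f (x k), x k - xstar⟫ := by
      unfold vf; rw [if_neg hg0]
    rw [hv]
    have heq : ⟪x k - xstar, ghat k⟫ = (2 * h k)⁻¹ * (a k - a (k+1)) + h k / 2 := by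
      rw [hexp]; field_simp; ring
    linarith
  set S := Real.sqrt (2 * (N:ℝ)) with hS_def
  have hS0 : 0 ≤ S := Real.sqrt_nonneg _
  have hS2 : S ^ 2 = 2 * (N:ℝ) := Real.sq_sqrt (by positivity)
  have hSpos : 0 < S := Real.sqrt_pos.2 (by positivity)
  -- Abel bound
  have habel : ∑ k ∈ Finset.Icc 1 N, (2 * h k)⁻¹ * (a k - a (k+1)) ≤ D * S / 2 := by
    have hbN : D ^ 2 * (2 * h N)⁻¹ = D * S / 2 := by
      rw [hh]
      rw [hS_def]
      have hs : (0:ℝ) < Real.sqrt (2 * (N:ℝ)) := Real.sqrt_pos.2 (by positivity)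
      field_simp
    have H := abel_sum_aux a (fun k => (2 * h k)⁻¹) (D^2) N hN1
      (by
        intro k h1 h2
        have hk1 : 0 < h k := hhk k h1
        have hk2 : 0 < h (k+1) := hhk (k+1) (by omega)
        have hle : h (k+1) ≤ h k := by
          rw [hh, hh]
          apply div_le_div_of_nonneg_left hD.le
          · exact Real.sqrt_pos.2 (by
              have : (1:ℝ) ≤ (k:ℝ) := by exact_mod_cast h1
              linarith)
          · apply Real.sqrt_le_sqrt
            push_cast
            linarith
        exact inv_anti₀ (by linarith) (by linarith))
      (by intro k h1 h2; exact inv_nonneg.2 (by linarith [hhk k h1]))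
      (by
        intro k h1 h2
        have := hxD k (Finset.mem_Icc.mpr ⟨h1, h2⟩)
        simpa [ha_def] using pow_le_pow_left₀ (norm_nonneg _) this 2)
      (by intro k h1 h2; simp [ha_def])
    have ha0' : 0 ≤ a (N+1) := by simp [ha_def]
    have hb0' : 0 ≤ (2 * h N)⁻¹ := inv_nonneg.2 (by linarith [hhk N hN1])
    calc ∑ k ∈ Finset.Icc 1 N, (2 * h k)⁻¹ * (a k - a (k+1))
        ≤ D^2 * (2 * h N)⁻¹ - (2 * h N)⁻¹ * a (N+1) := H
      _ ≤ D^2 * (2 * h N)⁻¹ := by nlinarith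
      _ = D * S / 2 := hbN
  -- step-size sum bound
  have hsumh : ∑ k ∈ Finset.Icc 1 N, h k ≤ D * S := by
    have hpt : ∀ k ∈ Finset.Icc 1 N, h k = (D / Real.sqrt 2) * (Real.sqrt k)⁻¹ := by
      intro k hk
      rw [hh, Real.sqrt_mul (by norm_num : (0:ℝ) ≤ 2), div_mul_eq_div_div, div_eq_mul_inv]
    rw [Finset.sum_congr rfl hpt, ← Finset.mul_sum]
    have h2p : (0:ℝ) < Real.sqrt 2 := Real.sqrt_pos.2 (by norm_num)
    have h22 : Real.sqrt 2 * Real.sqrt 2 = 2 := Real.mul_self_sqrt (by norm_num)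
    have hDdiv : 0 ≤ D / Real.sqrt 2 := by positivity
    calc (D / Real.sqrt 2) * ∑ k ∈ Finset.Icc 1 N, (Real.sqrt k)⁻¹
        ≤ (D / Real.sqrt 2) * (2 * Real.sqrt N) :=
          mul_le_mul_of_nonneg_left (sqrt_inv_sum_aux N) hDdiv
      _ = D * S := by
          rw [hS_def, Real.sqrt_mul (by norm_num : (0:ℝ) ≤ 2)]
          field_simp
          linear_combination (-1 : ℝ) * h22
  -- the infimum is below every term
  set m := (Finset.Icc 1 N).inf'
      (Finset.nonempty_Icc.mpr
        (Nat.cast_pos (α := ℝ) |>.mp (lt_of_lt_of_le (by positivity) hNbig)))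
      (fun k => vf f (x k) xstar) with hm_def
  have hmle : (N:ℝ) * m ≤ ∑ k ∈ Finset.Icc 1 N, vf f (x k) xstar := by
    have : ∑ k ∈ Finset.Icc 1 N, m ≤ ∑ k ∈ Finset.Icc 1 N, vf f (x k) xstar :=
      Finset.sum_le_sum (fun k hk => Finset.inf'_le _ hk)
    simpa [Finset.sum_const, Nat.card_Icc, nsmul_eq_mul] using this
  have hsum : ∑ k ∈ Finset.Icc 1 N, vf f (x k) xstar
      ≤ D * S / 2 + (∑ k ∈ Finset.Icc 1 N, h k) / 2 + (N:ℝ) * (δ * D) := by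
    calc ∑ k ∈ Finset.Icc 1 N, vf f (x k) xstar
        ≤ ∑ k ∈ Finset.Icc 1 N, ((2 * h k)⁻¹ * (a k - a (k+1)) + h k / 2 + δ * D) :=
          Finset.sum_le_sum key
      _ = (∑ k ∈ Finset.Icc 1 N, (2 * h k)⁻¹ * (a k - a (k+1)))
          + (∑ k ∈ Finset.Icc 1 N, h k) / 2 + (N:ℝ) * (δ * D) := by
          rw [Finset.sum_add_distrib, Finset.sum_add_distrib, Finset.sum_const,
            Nat.card_Icc, Finset.sum_div]
          simp [nsmul_eq_mul]
      _ ≤ D * S / 2 + (∑ k ∈ Finset.Icc 1 N, h k) / 2 + (N:ℝ) * (δ * D) := by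
          linarith [habel]
  -- D * S ≤ N * ε / 2
  have hεN : 18 * D ^ 2 ≤ (N:ℝ) * ε ^ 2 := by
    have := (div_le_iff₀ (by positivity : (0:ℝ) < ε ^ 2)).mp hNbig
    linarith
  have hDS : 2 * (D * S) ≤ (N:ℝ) * ε := by
    have h1 : (2 * (D * S)) ^ 2 ≤ ((N:ℝ) * ε) ^ 2 := by nlinarith [hS2, hεN, hN0.le]
    have h2 := Real.sqrt_le_sqrt h1
    rwa [Real.sqrt_sq (by positivity), Real.sqrt_sq (by positivity)] at h2
  -- finish
  have hfinal : (N:ℝ) * m ≤ (N:ℝ) * ε := by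
    have : (N:ℝ) * m ≤ D * S + (N:ℝ) * (ε / 2) := by
      rw [← hδD]
      linarith [hmle, hsum, hsumh]
    linarith
  exact le_of_mul_le_mul_left (by linarith [hfinal]) hN0
end
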